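/- arXiv:1604.02239 — 6 statements merged into one kernel-verified Lean document; each statement's English description precedes it below -/
import Mathlib

section
/- Let ω : [0,T] → ℝ^d be continuous with ω(0) = 0, and define H*_ε(ω) := inf { t ≥ 0 : t + sup_{0 ≤ s ≤ t} |ω(s)| ≥ ε } (with inf ∅ = T). Then for any two such paths ω, ω̃ one has |H*_ε(ω) − H*_ε(ω̃)| ≤ sup_{0 ≤ t ≤ T} |ω(t) − ω̃(t)|, i.e. H*_ε is 1-Lipschitz with respect to the uniform norm on paths. -/
/-!
Write `A t = sup_{s ≤ t} ‖ω s‖` and `A' t` likewise for `ω'`, and let `δ` be the uniform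
distance of the two paths. Since `A` is monotone and `A' ≤ A + δ`, we get
`t + A' t ≤ (t + δ) + A (t + δ)`: whenever `ω'` has hit the level `ε` at time `t`, the path `ω`
has hit it by time `t + δ` (or the time is capped at `T`). By symmetry the two hitting times
differ by at most `δ`.
-/

open Set

noncomputable section

def runningSup {E : Type*} [Norm E] (f : ℝ → E) (t : ℝ) : ℝ :=
  sSup ((fun s => ‖f s‖) '' Icc 0 t)

def hitTime (T ε : ℝ) (F : ℝ → ℝ) : ℝ :=
  sInf ({t ∈ Icc 0 T | ε ≤ F t} ∪ {T})

end

section RunningSup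

variable {E : Type*} [SeminormedAddCommGroup E] {f g : ℝ → E} {s t δ : ℝ}

lemma bddAbove_norm_image_Icc (hf : ContinuousOn f (Icc 0 t)) :
    BddAbove ((fun s => ‖f s‖) '' Icc 0 t) :=
  isCompact_Icc.bddAbove_image hf.norm

lemma runningSup_mono (hf : ContinuousOn f (Icc 0 t)) (hs : 0 ≤ s) (hst : s ≤ t) :
    runningSup f s ≤ runningSup f t :=
  csSup_le_csSup (bddAbove_norm_image_Icc hf) ((nonempty_Icc.2 hs).image _)
    (image_mono (Icc_subset_Icc_right hst))

lemma runningSup_le_add (hf : ContinuousOn f (Icc 0 t)) (ht : 0 ≤ t)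
    (hδ : ∀ s ∈ Icc 0 t, ‖f s - g s‖ ≤ δ) :
    runningSup g t ≤ runningSup f t + δ := by
  refine csSup_le ((nonempty_Icc.2 ht).image _) ?_
  rintro _ ⟨s, hs, rfl⟩
  calc ‖g s‖ ≤ ‖f s‖ + ‖f s - g s‖ := norm_le_norm_add_norm_sub _ _
    _ ≤ runningSup f t + δ :=
      add_le_add (le_csSup (bddAbove_norm_image_Icc hf) (mem_image_of_mem _ hs)) (hδ s hs)

end RunningSup

section HitTime

variable {T ε δ t : ℝ} {F G : ℝ → ℝ}

lemma bddBelow_hitTime_set : BddBelow ({t ∈ Icc 0 T | ε ≤ F t} ∪ {T}) :=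
  (bddBelow_Icc.mono (sep_subset _ _)).union bddBelow_singleton

lemma hitTime_le_of_mem (ht : t ∈ Icc 0 T) (hF : ε ≤ F t) : hitTime T ε F ≤ t :=
  csInf_le bddBelow_hitTime_set (Or.inl ⟨ht, hF⟩)

lemma hitTime_le : hitTime T ε F ≤ T :=
  csInf_le bddBelow_hitTime_set (Or.inr rfl)

lemma hitTime_le_hitTime_add (hδ : 0 ≤ δ)
    (hGF : ∀ t ∈ Icc 0 T, t + δ ≤ T → G t ≤ F (t + δ)) :
    hitTime T ε F ≤ hitTime T ε G + δ := by
  rw [← sub_le_iff_le_add]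
  refine le_csInf ⟨T, Or.inr rfl⟩ ?_
  rintro t (⟨ht, hG⟩ | rfl)
  · rw [sub_le_iff_le_add]
    rcases le_or_gt (t + δ) T with htδ | htδ
    · exact hitTime_le_of_mem ⟨by linarith [ht.1], htδ⟩ (hG.trans (hGF t ht htδ))
    · exact hitTime_le.trans htδ.le
  · exact sub_le_iff_le_add.2 (hitTime_le.trans (le_add_of_nonneg_right hδ))

end HitTime

lemma hitTime_runningSup_le_add {E : Type*} [SeminormedAddCommGroup E] {T ε δ : ℝ}
    {ω ω' : ℝ → E} (hω : ContinuousOn ω (Icc 0 T)) (hδ0 : 0 ≤ δ)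
    (hδ : ∀ s ∈ Icc 0 T, ‖ω s - ω' s‖ ≤ δ) :
    hitTime T ε (fun t => t + runningSup ω t) ≤
      hitTime T ε (fun t => t + runningSup ω' t) + δ := by
  refine hitTime_le_hitTime_add hδ0 fun t ht htδ => ?_
  have hsub : Icc 0 t ⊆ Icc 0 T := Icc_subset_Icc_right ht.2
  have hmono := runningSup_mono (hω.mono (Icc_subset_Icc_right htδ)) ht.1
    (le_add_of_nonneg_right hδ0)
  have hclose := runningSup_le_add (hω.mono hsub) ht.1 fun s hs => hδ s (hsub hs)
  linarith

theorem hstar_lipschitz_general (d : ℕ) (T ε : ℝ) (hT : 0 < T)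
    (ω ω' : ℝ → EuclideanSpace ℝ (Fin d))
    (hω : ContinuousOn ω (Icc 0 T)) (hω' : ContinuousOn ω' (Icc 0 T)) :
    |sInf ({t ∈ Icc 0 T | ε ≤ t + sSup ((fun s => ‖ω s‖) '' Icc 0 t)} ∪ {T}) -
      sInf ({t ∈ Icc 0 T | ε ≤ t + sSup ((fun s => ‖ω' s‖) '' Icc 0 t)} ∪ {T})| ≤
    sSup ((fun t => ‖ω t - ω' t‖) '' Icc 0 T) := by
  set δ := sSup ((fun t => ‖ω t - ω' t‖) '' Icc 0 T)
  have hδ : ∀ s ∈ Icc 0 T, ‖ω s - ω' s‖ ≤ δ := fun s hs =>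
    le_csSup (bddAbove_norm_image_Icc (hω.sub hω')) (mem_image_of_mem _ hs)
  have hδ' : ∀ s ∈ Icc 0 T, ‖ω' s - ω s‖ ≤ δ := fun s hs => norm_sub_rev (ω s) _ ▸ hδ s hs
  have hδ0 : 0 ≤ δ := (norm_nonneg _).trans (hδ 0 ⟨le_rfl, hT.le⟩)
  rw [abs_sub_le_iff]
  exact ⟨sub_le_iff_le_add'.2 (hitTime_runningSup_le_add hω hδ0 hδ),
    sub_le_iff_le_add'.2 (hitTime_runningSup_le_add hω' hδ0 hδ')⟩

/-- The hitting time `H*_ε(ω) = inf { t ≥ 0 : t + sup_{0 ≤ s ≤ t} |ω(s)| ≥ ε }` (with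
`inf ∅ = T`) is 1-Lipschitz with respect to the uniform norm on continuous paths
`ω : [0,T] → ℝ^d` with `ω 0 = 0`. -/
theorem hstar_lipschitz (d : ℕ) (T ε : ℝ) (hT : 0 < T) (hε : 0 < ε)
    (ω ω' : ℝ → EuclideanSpace ℝ (Fin d))
    (hω : ContinuousOn ω (Icc 0 T)) (hω' : ContinuousOn ω' (Icc 0 T))
    (h0 : ω 0 = 0) (h0' : ω' 0 = 0) :
    |sInf ({t ∈ Icc 0 T | ε ≤ t + sSup ((fun s => ‖ω s‖) '' Icc 0 t)} ∪ {T}) -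
      sInf ({t ∈ Icc 0 T | ε ≤ t + sSup ((fun s => ‖ω' s‖) '' Icc 0 t)} ∪ {T})| ≤
    sSup ((fun t => ‖ω t - ω' t‖) '' Icc 0 T) :=
  hstar_lipschitz_general d T ε hT ω ω' hω hω'
end

section
/- Fix ε > 0, L₁ > 0, T > 0 and a continuous path ω : [0,T] → ℝ^d with ω(0) = 0. With the hitting times H₀ := 0, H_{n+1} := inf { t ≥ H_n : |ω(t) − ω(H_n)| + L₁(t − H_n) ≥ ε } ∧ T, if H_n < T then Σ_{k=0}^{n−1} ( 2 |ω(H_{k+1}) − ω(H_k)|² + C (H_{k+1} − H_k) ) ≥ n ε², where C := 2 L₁ ε. In particular, if additionally the path satisfies Σ_{k=0}^{n−1} |ω(H_{k+1}) − ω(H_k)|² ≤ M, then n ε² ≤ 2M + C T. -/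
/-!
At a hitting time `H_{k+1} < T` the continuous quantity `|ω(t) − ω(H_k)| + L₁ (t − H_k)` has
reached `ε`, since the infimum of a closed set is attained. From `ε ≤ a + b` one gets
`ε² ≤ ε a + ε b ≤ (ε² + a²) / 2 + ε b`, i.e. `ε² ≤ a² + 2 ε b`; summing over `k < n` and
telescoping the time increments gives both bounds.
-/

open Set

section FirstPassage

variable {s T : ℝ}

theorem bddBelow_sep_Icc_union_singleton (p : ℝ → Prop) :
    BddBelow ({t ∈ Icc s T | p t} ∪ {T}) :=
  (bddBelow_Icc.mono fun _ ht => ht.1).union bddBelow_singleton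

theorem le_csInf_sep_Icc_union_singleton (p : ℝ → Prop) (hsT : s ≤ T) :
    s ≤ sInf ({t ∈ Icc s T | p t} ∪ {T}) := by
  refine le_csInf ⟨T, Or.inr rfl⟩ ?_
  rintro t (⟨⟨hst, -⟩, -⟩ | rfl)
  exacts [hst, hsT]

theorem csInf_sep_Icc_union_singleton_le (p : ℝ → Prop) :
    sInf ({t ∈ Icc s T | p t} ∪ {T}) ≤ T :=
  csInf_le (bddBelow_sep_Icc_union_singleton p) (Or.inr rfl)

theorem le_apply_csInf_sep_Icc_union_singleton {g : ℝ → ℝ} {ε : ℝ}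
    (hg : ContinuousOn g (Icc s T)) (hlt : sInf ({t ∈ Icc s T | ε ≤ g t} ∪ {T}) < T) :
    ε ≤ g (sInf ({t ∈ Icc s T | ε ≤ g t} ∪ {T})) := by
  have hclosed : IsClosed ({t ∈ Icc s T | ε ≤ g t} ∪ {T}) :=
    (hg.preimage_isClosed_of_isClosed isClosed_Icc isClosed_Ici).union isClosed_singleton
  rcases hclosed.csInf_mem ⟨T, Or.inr rfl⟩ (bddBelow_sep_Icc_union_singleton _) with
    ⟨-, hhit⟩ | hT
  · exact hhit
  · exact absurd hT hlt.ne

end FirstPassage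

section HittingSequence

variable {T : ℝ} {H : ℕ → ℝ} {p : ℕ → ℝ → Prop}

theorem le_of_eq_csInf_sep_Icc_union_singleton (h0 : H 0 ≤ T)
    (hrec : ∀ k, H (k + 1) = sInf ({t ∈ Icc (H k) T | p k t} ∪ {T})) (k : ℕ) : H k ≤ T := by
  cases k with
  | zero => exact h0
  | succ k => exact hrec k ▸ csInf_sep_Icc_union_singleton_le _

theorem monotone_of_eq_csInf_sep_Icc_union_singleton (h0 : H 0 ≤ T)
    (hrec : ∀ k, H (k + 1) = sInf ({t ∈ Icc (H k) T | p k t} ∪ {T})) : Monotone H :=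
  monotone_nat_of_le_succ fun k => hrec k ▸
    le_csInf_sep_Icc_union_singleton _ (le_of_eq_csInf_sep_Icc_union_singleton h0 hrec k)

end HittingSequence

theorem sq_le_sq_add_two_mul_of_le_add {ε a b : ℝ} (hε : 0 ≤ ε) (h : ε ≤ a + b) :
    ε ^ 2 ≤ a ^ 2 + 2 * ε * b := by
  nlinarith [mul_le_mul_of_nonneg_left h hε, sq_nonneg (ε - a)]

theorem hitting_times_quadratic_bound_general (d : ℕ) (T ε L₁ : ℝ)
    (hT : 0 < T) (hε : 0 < ε) (hL : 0 < L₁)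
    (ω : ℝ → EuclideanSpace ℝ (Fin d)) (hω : ContinuousOn ω (Icc 0 T))
    (H : ℕ → ℝ) (hH0 : H 0 = 0)
    (hHrec : ∀ n, H (n + 1) =
      sInf ({t ∈ Icc (H n) T | ε ≤ ‖ω t - ω (H n)‖ + L₁ * (t - H n)} ∪ {T}))
    (n : ℕ) (hn : H n < T) :
    (n : ℝ) * ε ^ 2 ≤ ∑ k ∈ Finset.range n,
      (2 * ‖ω (H (k + 1)) - ω (H k)‖ ^ 2 + (2 * L₁ * ε) * (H (k + 1) - H k)) ∧
    ∀ M : ℝ, (∑ k ∈ Finset.range n, ‖ω (H (k + 1)) - ω (H k)‖ ^ 2) ≤ M →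
      (n : ℝ) * ε ^ 2 ≤ 2 * M + (2 * L₁ * ε) * T := by
  have hmono : Monotone H := monotone_of_eq_csInf_sep_Icc_union_singleton (hH0 ▸ hT.le) hHrec
  have hstep : ∀ k ∈ Finset.range n,
      ε ^ 2 ≤ 2 * ‖ω (H (k + 1)) - ω (H k)‖ ^ 2 + (2 * L₁ * ε) * (H (k + 1) - H k) := by
    intro k hk
    have hlt : H (k + 1) < T := (hmono (Finset.mem_range.1 hk)).trans_lt hn
    have hcont : ContinuousOn (fun t => ‖ω t - ω (H k)‖ + L₁ * (t - H k)) (Icc (H k) T) :=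
      ((hω.mono (Icc_subset_Icc (hH0 ▸ hmono k.zero_le) le_rfl)).sub continuousOn_const).norm.add
        (by fun_prop)
    have hhit : ε ≤ ‖ω (H (k + 1)) - ω (H k)‖ + L₁ * (H (k + 1) - H k) := by
      rw [hHrec k] at hlt ⊢
      exact le_apply_csInf_sep_Icc_union_singleton hcont hlt
    nlinarith [sq_le_sq_add_two_mul_of_le_add hε.le hhit, sq_nonneg ‖ω (H (k + 1)) - ω (H k)‖]
  have hsum := Finset.card_nsmul_le_sum _ _ _ hstep
  rw [Finset.card_range, nsmul_eq_mul] at hsum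
  refine ⟨hsum, fun M hM => ?_⟩
  rw [Finset.sum_add_distrib, ← Finset.mul_sum, ← Finset.mul_sum, Finset.sum_range_sub, hH0,
    sub_zero] at hsum
  nlinarith [mul_le_mul_of_nonneg_left hn.le (by positivity : 0 ≤ 2 * L₁ * ε)]

/-- Pathwise core of Lemma 3.4: if `H_n < T` then the sum of
`2|ω(H_{k+1}) − ω(H_k)|² + C (H_{k+1} − H_k)` over `k < n` is at least `n ε²`,
where `C = 2 L₁ ε`; consequently a quadratic-increment bound `M` forces
`n ε² ≤ 2M + C T`. -/
theorem hitting_times_quadratic_bound (d : ℕ) (T ε L₁ : ℝ)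
    (hT : 0 < T) (hε : 0 < ε) (hL : 0 < L₁)
    (ω : ℝ → EuclideanSpace ℝ (Fin d)) (hω : ContinuousOn ω (Icc 0 T)) (h0 : ω 0 = 0)
    (H : ℕ → ℝ) (hH0 : H 0 = 0)
    (hHrec : ∀ n, H (n + 1) =
      sInf ({t ∈ Icc (H n) T | ε ≤ ‖ω t - ω (H n)‖ + L₁ * (t - H n)} ∪ {T}))
    (n : ℕ) (hn : H n < T) :
    (n : ℝ) * ε ^ 2 ≤ ∑ k ∈ Finset.range n,
      (2 * ‖ω (H (k + 1)) - ω (H k)‖ ^ 2 + (2 * L₁ * ε) * (H (k + 1) - H k)) ∧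
    ∀ M : ℝ, (∑ k ∈ Finset.range n, ‖ω (H (k + 1)) - ω (H k)‖ ^ 2) ≤ M →
      (n : ℝ) * ε ^ 2 ≤ 2 * M + (2 * L₁ * ε) * T :=
  hitting_times_quadratic_bound_general d T ε L₁ hT hε hL ω hω H hH0 hHrec n hn
end

section
/- Let B be a d-dimensional Brownian motion, L₁ ≥ 1, and for |x| ≤ R define the hitting time τ(x,R) := inf { s ≥ 0 : |x + B_s| + L₁ s ≥ R } ∧ T. Then for any x₁, x₂ with |x₁| ≤ R₁, |x₂| ≤ R₂, one has E[ |τ(x₁,R₁) − τ(x₂,R₂)| ] ≤ |x₁ − x₂| + |R₁ − R₂|. -/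
open Set Filter Topology MeasureTheory

/-!
Put `σ = τ₁ ∧ τ₂`. If `τ₁ < τ₂`, then `|x₁ + B_{τ₁}| + L₁ τ₁ ≥ R₁` because `τ₁ < T`, while
`|x₂ + B_{τ₂}| + L₁ τ₂ ≤ R₂` by continuity; as `L₁ ≥ 1`, this gives pathwise
`|τ₁ - τ₂| ≤ |x₁ - x₂| + |R₁ - R₂| + ∑ᵢ (|xᵢ + B_σ| - |xᵢ + B_{τᵢ}|)`.
Optional sampling gives `xᵢ + B_σ = E[xᵢ + B_{τᵢ} | ℱ_σ]`, so by conditional Jensen every summand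
has nonpositive expectation.

Optional sampling at a bounded stopping time `ρ` is reduced to the countable-range case through the
dyadic approximations `ρₙ` of `ρ` from above: the values `B_{ρₙ} = E[B_T | ℱ_{ρₙ}]` are uniformly integrable, so
`∫ₛ B_{ρₙ} → ∫ₛ B_ρ` by Vitali's theorem and path continuity.
-/

namespace MeasureTheory

variable {ι α β γ : Type*} {m : MeasurableSpace α} {μ : Measure α}
  [NormedAddCommGroup β] [NormedAddCommGroup γ] {p : ENNReal} {f : ι → α → β} {g : ι → α → γ}

theorem UnifIntegrable.of_norm_le (hg : UnifIntegrable g p μ)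
    (hfg : ∀ i, ∀ᵐ x ∂μ, ‖f i x‖ ≤ ‖g i x‖) : UnifIntegrable f p μ := by
  intro ε hε
  obtain ⟨δ, hδ, hsmall⟩ := hg hε
  refine ⟨δ, hδ, fun i s hs hμs => (eLpNorm_mono_ae ?_).trans (hsmall i s hs hμs)⟩
  filter_upwards [hfg i] with x hx
  by_cases hxs : x ∈ s <;> simp [hxs, hx]

theorem UniformIntegrable.of_norm_le (hg : UniformIntegrable g p μ)
    (hf : ∀ i, AEStronglyMeasurable (f i) μ) (hfg : ∀ i, ∀ᵐ x ∂μ, ‖f i x‖ ≤ ‖g i x‖) :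
    UniformIntegrable f p μ :=
  let ⟨C, hC⟩ := hg.2.2
  ⟨hf, hg.2.1.of_norm_le hfg, C, fun i => (eLpNorm_mono_ae (hfg i)).trans (hC i)⟩

end MeasureTheory

noncomputable def dyadicCeil (n : ℕ) (t : ℝ) : ℝ := ⌈t * 2 ^ n⌉ / 2 ^ n

section Dyadic

variable (n : ℕ) {s t : ℝ}

theorem le_dyadicCeil : t ≤ dyadicCeil n t := by
  rw [dyadicCeil, le_div_iff₀ (by positivity)]
  exact Int.le_ceil _

theorem dyadicCeil_le_add : dyadicCeil n t ≤ t + (1 / 2) ^ n := by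
  rw [dyadicCeil, div_le_iff₀ (by positivity), add_mul, one_div_pow,
    one_div_mul_cancel (by positivity)]
  exact (Int.ceil_lt_add_one _).le

theorem dyadicCeil_le_iff : dyadicCeil n s ≤ t ↔ s ≤ ⌊t * 2 ^ n⌋ / 2 ^ n := by
  rw [dyadicCeil, div_le_iff₀ (by positivity), le_div_iff₀ (by positivity), ← Int.le_floor,
    Int.ceil_le]

theorem floor_mul_two_pow_div_le : (⌊t * 2 ^ n⌋ : ℝ) / 2 ^ n ≤ t := by
  rw [div_le_iff₀ (by positivity)]
  exact Int.floor_le _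

theorem countable_range_dyadicCeil : (range (dyadicCeil n)).Countable :=
  (countable_range fun k : ℤ => (k : ℝ) / 2 ^ n).mono <| by
    rintro _ ⟨t, rfl⟩
    exact ⟨_, rfl⟩

variable {n} in
theorem tendsto_dyadicCeil (t : ℝ) : Tendsto (dyadicCeil · t) atTop (𝓝 t) := by
  have h : Tendsto (fun n : ℕ => t + (1 / 2) ^ n) atTop (𝓝 t) := by
    simpa using tendsto_const_nhds.add
      (tendsto_pow_atTop_nhds_zero_of_lt_one (r := (1 / 2 : ℝ)) (by norm_num) (by norm_num))
  exact tendsto_of_tendsto_of_tendsto_of_le_of_le tendsto_const_nhds h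
    (fun n => le_dyadicCeil n) (fun n => dyadicCeil_le_add n)

end Dyadic

namespace MeasureTheory

variable {Ω E : Type*} {m0 : MeasurableSpace Ω} {ℱ : Filtration ℝ m0} {μ : Measure Ω}
  [IsFiniteMeasure μ] [NormedAddCommGroup E] [NormedSpace ℝ E] [CompleteSpace E]
  [MeasurableSpace E] [BorelSpace E] [SecondCountableTopology E] {B : ℝ → Ω → E} {T : ℝ}

theorem IsStoppingTime.dyadicCeil {ρ : Ω → ℝ} (hρ : IsStoppingTime ℱ fun ω => (ρ ω : WithTop ℝ))
    (n : ℕ) : IsStoppingTime ℱ fun ω => (dyadicCeil n (ρ ω) : WithTop ℝ) := by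
  intro t
  simp only [WithTop.coe_le_coe, dyadicCeil_le_iff]
  exact ℱ.mono (floor_mul_two_pow_div_le (t := t) n) _ (by simpa using hρ (⌊t * 2 ^ n⌋ / 2 ^ n))

theorem Martingale.uniformIntegrable_stoppedValue {ι : Type*} (hB : Martingale B ℱ μ)
    (hprog : IsStronglyProgressive ℱ B) {τ : ι → Ω → WithTop ℝ}
    (hτ : ∀ i, IsStoppingTime ℱ (τ i)) (hτT : ∀ i ω, τ i ω ≤ T)
    (hτc : ∀ i, (range (τ i)).Countable) :
    UniformIntegrable (fun i => stoppedValue B (τ i)) 1 μ := by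
  refine ((hB.integrable T).norm.uniformIntegrable_condExp
    fun i => (hτ i).measurableSpace_le).of_norm_le (fun i => ((measurable_stoppedValue hprog
      (hτ i)).mono (hτ i).measurableSpace_le le_rfl).aestronglyMeasurable) fun i => ?_
  filter_upwards [hB.stoppedValue_ae_eq_condExp_of_le_const_of_countable_range (hτ i) (hτT i)
      (hτc i), norm_condExp_le (m := (hτ i).measurableSpace) (μ := μ) (B T),
    condExp_nonneg (m := (hτ i).measurableSpace) (μ := μ) (f := fun ω => ‖B T ω‖)
      (ae_of_all _ fun ω => norm_nonneg _)] with ω hsample hJensen hnonneg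
  rw [hsample, Real.norm_of_nonneg hnonneg]
  exact hJensen

variable {ρ σ τ : Ω → ℝ}

theorem Martingale.stoppedValue_ae_eq_condExp_of_continuous (hB : Martingale B ℱ μ)
    (hcont : ∀ ω, Continuous (B · ω)) (hρ : IsStoppingTime ℱ fun ω => (ρ ω : WithTop ℝ))
    (hρT : ∀ ω, ρ ω ≤ T) :
    stoppedValue B (fun ω => (ρ ω : WithTop ℝ)) =ᵐ[μ] μ[B T | hρ.measurableSpace] := by
  set ρn : ℕ → Ω → ℝ := fun n ω => min (dyadicCeil n (ρ ω)) T
  have hρn : ∀ n, IsStoppingTime ℱ fun ω => (ρn n ω : WithTop ℝ) := fun n => by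
    simpa only [ρn, WithTop.coe_min] using (hρ.dyadicCeil n).min_const T
  have hρn_le : ∀ n ω, (ρn n ω : WithTop ℝ) ≤ T := fun n ω =>
    WithTop.coe_le_coe.2 (min_le_right _ _)
  have hρn_range : ∀ n, (range fun ω => (ρn n ω : WithTop ℝ)).Countable := fun n =>
    ((countable_range_dyadicCeil n).image fun s => ((min s T : ℝ) : WithTop ℝ)).mono <| by
      rintro _ ⟨ω, rfl⟩
      exact ⟨_, ⟨ρ ω, rfl⟩, rfl⟩
  have hprog := hB.stronglyAdapted.isStronglyProgressive_of_continuous hcont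
  have hUI := hB.uniformIntegrable_stoppedValue hprog hρn hρn_le hρn_range
  have htendsto : ∀ ω, Tendsto (fun n => B (ρn n ω) ω) atTop (𝓝 (B (ρ ω) ω)) := fun ω => by
    refine (hcont ω).continuousAt.tendsto.comp ?_
    simpa [min_eq_left (hρT ω)] using (tendsto_dyadicCeil (ρ ω)).min (tendsto_const_nhds (x := T))
  have hint : Integrable (fun ω => B (ρ ω) ω) μ :=
    hUI.integrable_of_ae_tendsto (ae_of_all _ htendsto)
  have hL1 := tendsto_Lp_finite_of_tendsto_ae le_rfl ENNReal.one_ne_top hUI.1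
    (memLp_one_iff_integrable.2 hint) hUI.2.1 (ae_of_all _ htendsto)
  refine ae_eq_condExp_of_forall_setIntegral_eq hρ.measurableSpace_le (hB.integrable T)
    (fun s _ _ => hint.integrableOn) (fun s hs _ => ?_)
    (measurable_stoppedValue hprog hρ).stronglyMeasurable.aestronglyMeasurable
  refine tendsto_nhds_unique (tendsto_setIntegral_of_L1' _ hint.1
    (Eventually.of_forall fun n => memLp_one_iff_integrable.1 (hUI.memLp n)) hL1 s)
    (tendsto_const_nhds.congr fun n => ?_)
  have hs_n := hρ.measurableSpace_mono (hρn n)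
    (fun ω => WithTop.coe_le_coe.2 (le_min (le_dyadicCeil n) (hρT ω))) s hs
  rw [integral_congr_ae <| ae_restrict_of_ae <|
      hB.stoppedValue_ae_eq_condExp_of_le_const_of_countable_range (hρn n) (hρn_le n) (hρn_range n),
    setIntegral_condExp (hρn n).measurableSpace_le (hB.integrable T) hs_n]

theorem Martingale.stoppedValue_ae_eq_condExp_stoppedValue_of_continuous (hB : Martingale B ℱ μ)
    (hcont : ∀ ω, Continuous (B · ω)) (hσ : IsStoppingTime ℱ fun ω => (σ ω : WithTop ℝ))
    (hτ : IsStoppingTime ℱ fun ω => (τ ω : WithTop ℝ)) (hστ : σ ≤ τ) (hτT : ∀ ω, τ ω ≤ T) :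
    stoppedValue B (fun ω => (σ ω : WithTop ℝ)) =ᵐ[μ]
      μ[stoppedValue B (fun ω => (τ ω : WithTop ℝ)) | hσ.measurableSpace] :=
  (hB.stoppedValue_ae_eq_condExp_of_continuous hcont hσ fun ω => (hστ ω).trans (hτT ω)).trans <|
    (condExp_condExp_of_le (hσ.measurableSpace_mono hτ fun ω => WithTop.coe_le_coe.2 (hστ ω))
      hτ.measurableSpace_le).symm.trans
    (condExp_congr_ae (hB.stoppedValue_ae_eq_condExp_of_continuous hcont hτ hτT).symm)

theorem Martingale.integrable_stoppedValue_of_continuous (hB : Martingale B ℱ μ)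
    (hcont : ∀ ω, Continuous (B · ω)) (hρ : IsStoppingTime ℱ fun ω => (ρ ω : WithTop ℝ))
    (hρT : ∀ ω, ρ ω ≤ T) : Integrable (fun ω => B (ρ ω) ω) μ :=
  integrable_condExp.congr (hB.stoppedValue_ae_eq_condExp_of_continuous hcont hρ hρT).symm

theorem Martingale.integral_norm_add_stoppedValue_le_of_continuous (hB : Martingale B ℱ μ)
    (hcont : ∀ ω, Continuous (B · ω)) (hσ : IsStoppingTime ℱ fun ω => (σ ω : WithTop ℝ))
    (hτ : IsStoppingTime ℱ fun ω => (τ ω : WithTop ℝ)) (hστ : σ ≤ τ) (hτT : ∀ ω, τ ω ≤ T)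
    (x : E) : ∫ ω, ‖x + B (σ ω) ω‖ ∂μ ≤ ∫ ω, ‖x + B (τ ω) ω‖ ∂μ := by
  have hsample : (fun ω => x + B (σ ω) ω) =ᵐ[μ]
      μ[fun ω => x + B (τ ω) ω | hσ.measurableSpace] := by
    filter_upwards [hB.stoppedValue_ae_eq_condExp_stoppedValue_of_continuous hcont hσ hτ hστ hτT,
      condExp_add (integrable_const x) (hB.integrable_stoppedValue_of_continuous hcont hτ hτT)
        hσ.measurableSpace] with ω h1 h2
    rw [show (fun ω => x + B (τ ω) ω) = (fun _ => x) + fun ω => B (τ ω) ω from rfl, h2,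
      Pi.add_apply, condExp_const hσ.measurableSpace_le]
    exact congrArg (x + ·) h1
  exact (integral_congr_ae (hsample.fun_comp norm)).trans_le (integral_norm_condExp_le _)

end MeasureTheory

theorem IsCompact.exists_le_iff_forall_exists_lt {X : Type*} [TopologicalSpace X] {K D : Set X}
    (hK : IsCompact K) (hDK : D ⊆ K) (hKD : K ⊆ closure D) {g : X → ℝ} (hg : Continuous g)
    {R : ℝ} : (∃ s ∈ K, R ≤ g s) ↔ ∀ k : ℕ, ∃ s ∈ D, R < g s + 1 / (k + 1) := by
  constructor
  · rintro ⟨s, hsK, hRs⟩ k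
    obtain ⟨y, hy, hyD⟩ := mem_closure_iff.1 (hKD hsK) {y | g s < g y + 1 / (k + 1)}
      (isOpen_lt continuous_const (hg.add continuous_const)) (by simp; positivity)
    exact ⟨y, hyD, hRs.trans_lt hy⟩
  · intro h
    obtain ⟨s₀, hs₀D, -⟩ := h 0
    obtain ⟨s, hsK, hmax⟩ := hK.exists_isMaxOn ⟨s₀, hDK hs₀D⟩ hg.continuousOn
    refine ⟨s, hsK, le_of_forall_pos_lt_add fun ε hε => ?_⟩
    obtain ⟨k, hk⟩ := exists_nat_one_div_lt hε
    obtain ⟨y, hyD, hy⟩ := h k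
    linarith [isMaxOn_iff.1 hmax y (hDK hyD)]

/-- Adding `T` to the set caps the infimum at `T` and keeps it away from `sInf ∅ = 0`. -/
noncomputable def firstPassage (g : ℝ → ℝ) (R T : ℝ) : ℝ :=
  sInf ({s ∈ Icc 0 T | R ≤ g s} ∪ {T})

section FirstPassage

variable {g : ℝ → ℝ} {R T : ℝ}

theorem passageSet_subset_Icc (hT : 0 ≤ T) : {s ∈ Icc 0 T | R ≤ g s} ∪ {T} ⊆ Icc 0 T := by
  rintro u (⟨hu, -⟩ | rfl)
  exacts [hu, right_mem_Icc.2 hT]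

theorem firstPassage_le_of_mem (hT : 0 ≤ T) {s : ℝ} (hs : s ∈ Icc 0 T) (hRs : R ≤ g s) :
    firstPassage g R T ≤ s :=
  csInf_le (bddBelow_Icc.mono (passageSet_subset_Icc hT)) (Or.inl ⟨hs, hRs⟩)

theorem firstPassage_mem_Icc (hT : 0 ≤ T) : firstPassage g R T ∈ Icc 0 T :=
  ⟨le_csInf ⟨T, Or.inr rfl⟩ fun _ hu => (passageSet_subset_Icc hT hu).1,
    csInf_le (bddBelow_Icc.mono (passageSet_subset_Icc hT)) (Or.inr rfl)⟩

theorem le_apply_firstPassage (hT : 0 ≤ T) (hg : Continuous g) (h : firstPassage g R T < T) :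
    R ≤ g (firstPassage g R T) := by
  have hclosed : IsClosed ({s ∈ Icc 0 T | R ≤ g s} ∪ {T}) :=
    (isClosed_Icc.inter (isClosed_le continuous_const hg)).union isClosed_singleton
  rcases hclosed.csInf_mem ⟨T, Or.inr rfl⟩ (bddBelow_Icc.mono (passageSet_subset_Icc hT))
    with ⟨-, hmem⟩ | hmem
  · exact hmem
  · exact absurd hmem h.ne

theorem apply_firstPassage_le (hT : 0 ≤ T) (hg : Continuous g) (h0 : g 0 ≤ R) :
    g (firstPassage g R T) ≤ R := by
  set t := firstPassage g R T
  have ht := firstPassage_mem_Icc (g := g) (R := R) hT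
  by_contra! hlt
  obtain ⟨s, hs, hgs⟩ := intermediate_value_Icc ht.1 hg.continuousOn ⟨h0, hlt.le⟩
  have hts : t ≤ s := firstPassage_le_of_mem hT ⟨hs.1, hs.2.trans ht.2⟩ hgs.ge
  rw [le_antisymm hs.2 hts] at hgs
  exact hlt.ne' hgs

theorem firstPassage_le_iff (hT : 0 ≤ T) (hg : Continuous g) {t : ℝ} (htT : t < T) :
    firstPassage g R T ≤ t ↔ ∃ s ∈ Icc 0 t, R ≤ g s := by
  refine ⟨fun h => ⟨_, ⟨(firstPassage_mem_Icc hT).1, h⟩,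
    le_apply_firstPassage hT hg (h.trans_lt htT)⟩, ?_⟩
  rintro ⟨s, hs, hRs⟩
  exact (firstPassage_le_of_mem hT ⟨hs.1, hs.2.trans htT.le⟩ hRs).trans hs.2

end FirstPassage

theorem MeasureTheory.Adapted.isStoppingTime_firstPassage {Ω : Type*} {m0 : MeasurableSpace Ω}
    {ℱ : Filtration ℝ m0} {X : ℝ → Ω → ℝ} (hX : Adapted ℱ X) (hcont : ∀ ω, Continuous (X · ω))
    {T : ℝ} (hT : 0 ≤ T) (R : ℝ) :
    IsStoppingTime ℱ fun ω => (firstPassage (X · ω) R T : WithTop ℝ) := by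
  intro t
  simp only [WithTop.coe_le_coe]
  rcases le_or_gt T t with hTt | htT
  · simp [fun ω => (firstPassage_mem_Icc (g := (X · ω)) (R := R) hT).2.trans hTt]
  rcases lt_or_ge t 0 with ht0 | ht0
  · simp [fun ω => not_le.2 (ht0.trans_le (firstPassage_mem_Icc (g := (X · ω)) (R := R) hT).1)]
  obtain ⟨D, hDsub, hDc, hDdense⟩ :=
    (TopologicalSpace.IsSeparable.of_separableSpace (Icc 0 t)).exists_countable_dense_subset
  have hset : {ω | firstPassage (X · ω) R T ≤ t} =
      ⋂ k : ℕ, ⋃ s ∈ D, {ω | R < X s ω + 1 / (k + 1)} := by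
    ext ω
    simp only [mem_ofPred_eq, mem_iInter, mem_iUnion, exists_prop,
      firstPassage_le_iff hT (hcont ω) htT,
      isCompact_Icc.exists_le_iff_forall_exists_lt hDsub hDdense (hcont ω)]
  rw [hset]
  refine .iInter fun k => .biUnion hDc fun s hs => measurableSet_lt measurable_const ?_
  exact ((hX s).mono (ℱ.mono (hDsub hs).2) le_rfl).add_const _

section Comparison

variable {E : Type*} [NormedAddCommGroup E] {f : ℝ → E} {L T : ℝ} {x₁ x₂ : E} {R₁ R₂ : ℝ}

theorem firstPassage_sub_firstPassage_le (hf : Continuous f) (hT : 0 ≤ T) (hL : 1 ≤ L)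
    (h₂ : ‖x₂ + f 0‖ ≤ R₂)
    (hle : firstPassage (fun s => ‖x₁ + f s‖ + L * s) R₁ T ≤
      firstPassage (fun s => ‖x₂ + f s‖ + L * s) R₂ T) :
    firstPassage (fun s => ‖x₂ + f s‖ + L * s) R₂ T -
        firstPassage (fun s => ‖x₁ + f s‖ + L * s) R₁ T ≤
      ‖x₁ - x₂‖ + |R₁ - R₂| + (‖x₂ + f (firstPassage (fun s => ‖x₁ + f s‖ + L * s) R₁ T)‖ -
        ‖x₂ + f (firstPassage (fun s => ‖x₂ + f s‖ + L * s) R₂ T)‖) := by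
  have hg : ∀ x : E, Continuous fun s => ‖x + f s‖ + L * s := fun x => by fun_prop
  set t₁ := firstPassage (fun s => ‖x₁ + f s‖ + L * s) R₁ T
  set t₂ := firstPassage (fun s => ‖x₂ + f s‖ + L * s) R₂ T
  rcases hle.eq_or_lt with heq | hlt
  · rw [heq, sub_self, sub_self, add_zero]
    positivity
  have hit₁ : R₁ ≤ ‖x₁ + f t₁‖ + L * t₁ :=
    le_apply_firstPassage hT (hg x₁) (hlt.trans_le (firstPassage_mem_Icc hT).2)
  have hit₂ : ‖x₂ + f t₂‖ + L * t₂ ≤ R₂ :=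
    apply_firstPassage_le hT (hg x₂) (by simpa using h₂)
  have hnorm : ‖x₁ + f t₁‖ ≤ ‖x₁ - x₂‖ + ‖x₂ + f t₁‖ := by
    rw [show x₁ + f t₁ = (x₁ - x₂) + (x₂ + f t₁) by abel]
    exact norm_add_le _ _
  have hslope : t₂ - t₁ ≤ L * (t₂ - t₁) := le_mul_of_one_le_left (sub_nonneg.2 hle) hL
  linarith [le_abs_self (R₂ - R₁), abs_sub_comm R₁ R₂]

theorem abs_firstPassage_sub_firstPassage_le (hf : Continuous f) (hT : 0 ≤ T) (hL : 1 ≤ L)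
    (h₁ : ‖x₁ + f 0‖ ≤ R₁) (h₂ : ‖x₂ + f 0‖ ≤ R₂) :
    |firstPassage (fun s => ‖x₁ + f s‖ + L * s) R₁ T -
        firstPassage (fun s => ‖x₂ + f s‖ + L * s) R₂ T| ≤
      ‖x₁ - x₂‖ + |R₁ - R₂| +
        (‖x₁ + f (min (firstPassage (fun s => ‖x₁ + f s‖ + L * s) R₁ T)
          (firstPassage (fun s => ‖x₂ + f s‖ + L * s) R₂ T))‖ -
          ‖x₁ + f (firstPassage (fun s => ‖x₁ + f s‖ + L * s) R₁ T)‖) +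
        (‖x₂ + f (min (firstPassage (fun s => ‖x₁ + f s‖ + L * s) R₁ T)
          (firstPassage (fun s => ‖x₂ + f s‖ + L * s) R₂ T))‖ -
          ‖x₂ + f (firstPassage (fun s => ‖x₂ + f s‖ + L * s) R₂ T)‖) := by
  rcases le_total (firstPassage (fun s => ‖x₁ + f s‖ + L * s) R₁ T)
    (firstPassage (fun s => ‖x₂ + f s‖ + L * s) R₂ T) with hle | hle
  · rw [abs_sub_comm, abs_of_nonneg (sub_nonneg.2 hle), min_eq_left hle, sub_self, add_zero]
    exact firstPassage_sub_firstPassage_le hf hT hL h₂ hle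
  · rw [abs_of_nonneg (sub_nonneg.2 hle), min_eq_right hle, sub_self]
    linarith [firstPassage_sub_firstPassage_le hf hT hL h₁ hle, norm_sub_rev x₁ x₂,
      abs_sub_comm R₁ R₂]

end Comparison

namespace MeasureTheory

variable {Ω E : Type*} {m0 : MeasurableSpace Ω} {ℱ : Filtration ℝ m0} {μ : Measure Ω}
  [IsProbabilityMeasure μ] [NormedAddCommGroup E] [NormedSpace ℝ E] [CompleteSpace E]
  [MeasurableSpace E] [BorelSpace E] [SecondCountableTopology E] {B : ℝ → Ω → E}

theorem Martingale.integral_abs_firstPassage_sub_firstPassage_le (hB : Martingale B ℱ μ)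
    (hcont : ∀ ω, Continuous (B · ω)) (hB0 : ∀ ω, B 0 ω = 0) {T L : ℝ} (hT : 0 ≤ T) (hL : 1 ≤ L)
    {x₁ x₂ : E} {R₁ R₂ : ℝ} (h₁ : ‖x₁‖ ≤ R₁) (h₂ : ‖x₂‖ ≤ R₂) :
    ∫ ω, |firstPassage (fun s => ‖x₁ + B s ω‖ + L * s) R₁ T -
        firstPassage (fun s => ‖x₂ + B s ω‖ + L * s) R₂ T| ∂μ ≤ ‖x₁ - x₂‖ + |R₁ - R₂| := by
  set τ : E → ℝ → Ω → ℝ := fun x R ω => firstPassage (fun s => ‖x + B s ω‖ + L * s) R T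
  have hτ : ∀ x R, IsStoppingTime ℱ fun ω => (τ x R ω : WithTop ℝ) := fun x R =>
    Adapted.isStoppingTime_firstPassage
      (fun s => (measurable_norm.comp ((hB.stronglyAdapted.adapted s).const_add x)).add_const _)
      (fun ω => by fun_prop) hT R
  have hτT : ∀ x R ω, τ x R ω ≤ T := fun x R ω => (firstPassage_mem_Icc hT).2
  set σ := fun ω => min (τ x₁ R₁ ω) (τ x₂ R₂ ω)
  have hσ : IsStoppingTime ℱ fun ω => (σ ω : WithTop ℝ) := by
    simpa only [σ, WithTop.coe_min] using (hτ x₁ R₁).min (hτ x₂ R₂)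
  have hint : ∀ x (ρ : Ω → ℝ), IsStoppingTime ℱ (fun ω => (ρ ω : WithTop ℝ)) → (∀ ω, ρ ω ≤ T) →
      Integrable (fun ω => ‖x + B (ρ ω) ω‖) μ := fun x ρ hρ hρT =>
    ((integrable_const x).add (hB.integrable_stoppedValue_of_continuous hcont hρ hρT)).norm
  have hσT : ∀ ω, σ ω ≤ T := fun ω => (min_le_left _ _).trans (hτT x₁ R₁ ω)
  have hint₁σ := hint x₁ σ hσ hσT
  have hint₂σ := hint x₂ σ hσ hσT
  have hint₁ := hint x₁ _ (hτ x₁ R₁) (hτT x₁ R₁)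
  have hint₂ := hint x₂ _ (hτ x₂ R₂) (hτT x₂ R₂)
  calc ∫ ω, |τ x₁ R₁ ω - τ x₂ R₂ ω| ∂μ
      ≤ ∫ ω, (‖x₁ - x₂‖ + |R₁ - R₂| + (‖x₁ + B (σ ω) ω‖ - ‖x₁ + B (τ x₁ R₁ ω) ω‖) +
          (‖x₂ + B (σ ω) ω‖ - ‖x₂ + B (τ x₂ R₂ ω) ω‖)) ∂μ :=
        integral_mono_of_nonneg (ae_of_all _ fun ω => abs_nonneg _) (by fun_prop) <|
          ae_of_all _ fun ω => abs_firstPassage_sub_firstPassage_le (hcont ω) hT hL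
            (by simpa [hB0] using h₁) (by simpa [hB0] using h₂)
    _ = ‖x₁ - x₂‖ + |R₁ - R₂| + (∫ ω, ‖x₁ + B (σ ω) ω‖ ∂μ - ∫ ω, ‖x₁ + B (τ x₁ R₁ ω) ω‖ ∂μ) +
          (∫ ω, ‖x₂ + B (σ ω) ω‖ ∂μ - ∫ ω, ‖x₂ + B (τ x₂ R₂ ω) ω‖ ∂μ) := by
      rw [integral_add (by fun_prop) (by fun_prop), integral_add (by fun_prop) (by fun_prop),
        integral_sub hint₁σ hint₁, integral_sub hint₂σ hint₂, integral_const, probReal_univ,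
        one_smul]
    _ ≤ ‖x₁ - x₂‖ + |R₁ - R₂| := by
      linarith [hB.integral_norm_add_stoppedValue_le_of_continuous hcont hσ (hτ x₁ R₁)
        (fun ω => min_le_left _ _) (hτT x₁ R₁) x₁,
        hB.integral_norm_add_stoppedValue_le_of_continuous hcont hσ (hτ x₂ R₂)
        (fun ω => min_le_right _ _) (hτT x₂ R₂) x₂]

end MeasureTheory

/-- Regularity of the hitting times `τ(x,R) = inf { s : |x + B_s| + L₁ s ≥ R } ∧ T`
of a Brownian motion (continuous martingale started at 0):
`E[|τ(x₁,R₁) − τ(x₂,R₂)|] ≤ |x₁ − x₂| + |R₁ − R₂|` whenever `|xᵢ| ≤ Rᵢ`. -/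
theorem hitting_time_L1_regularity (d : ℕ) (T L₁ : ℝ) (hT : 0 < T) (hL : 1 ≤ L₁)
    {Ω : Type*} {m0 : MeasurableSpace Ω} (P : Measure Ω) [IsProbabilityMeasure P]
    (ℱ : Filtration ℝ m0)
    (B : ℝ → Ω → EuclideanSpace ℝ (Fin d))
    (hB0 : ∀ ω, B 0 ω = 0)
    (hBcont : ∀ ω, Continuous fun s => B s ω)
    (hBmart : Martingale B ℱ P)
    (x₁ x₂ : EuclideanSpace ℝ (Fin d)) (R₁ R₂ : ℝ)
    (h1 : ‖x₁‖ ≤ R₁) (h2 : ‖x₂‖ ≤ R₂)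
    (τ : EuclideanSpace ℝ (Fin d) → ℝ → Ω → ℝ)
    (hτ : ∀ x R ω, τ x R ω = sInf ({s ∈ Icc 0 T | R ≤ ‖x + B s ω‖ + L₁ * s} ∪ {T})) :
    ∫ ω, |τ x₁ R₁ ω - τ x₂ R₂ ω| ∂P ≤ ‖x₁ - x₂‖ + |R₁ - R₂| := by
  simp only [hτ]
  exact hBmart.integral_abs_firstPassage_sub_firstPassage_le hBcont hB0 hT.le hL h1 h2
end

section
/- On the cylinder Q̂ := [0, ε) × { x ∈ ℝ^d : |x| < ε } with parabolic boundary ∂Q̂ := ({ε} × { |x| ≤ ε }) ∪ ([0,ε) × { |x| = ε }), there is no continuous function v on Q̂ ∪ ∂Q̂ such that v(t,x) = t on ∂Q̂ and t ↦ v(t,x) is constant on [0, ε] for each fixed x with |x| < ε. -/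
open Set Filter Topology

/-- Example 2.5: on the cylinder `[0,ε) × {|x| < ε}` with parabolic boundary, there is
no continuous function `v` on `[0,ε] × {|x| ≤ ε}` which equals the boundary data
`h(t,x) = t` on the parabolic boundary and is constant in `t` at each interior
point `|x| < ε`. -/
theorem no_continuous_solution_on_cylinder (d : ℕ) (hd : 1 ≤ d) (ε : ℝ) (hε : 0 < ε) :
    ¬ ∃ v : ℝ × EuclideanSpace ℝ (Fin d) → ℝ,
      ContinuousOn v (Icc 0 ε ×ˢ Metric.closedBall 0 ε) ∧
      (∀ x : EuclideanSpace ℝ (Fin d), ‖x‖ ≤ ε → v (ε, x) = ε) ∧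
      (∀ t : ℝ, ∀ x : EuclideanSpace ℝ (Fin d),
        0 ≤ t → t < ε → ‖x‖ = ε → v (t, x) = t) ∧
      (∀ t t' : ℝ, ∀ x : EuclideanSpace ℝ (Fin d),
        t ∈ Icc 0 ε → t' ∈ Icc (0 : ℝ) ε → ‖x‖ < ε → v (t, x) = v (t', x)) := by
  rintro ⟨v, hcont, hterm, hlat, hconst⟩
  have i : Fin d := ⟨0, hd⟩
  set x₀ : EuclideanSpace ℝ (Fin d) := ε • EuclideanSpace.single i 1 with hx₀def
  have hnx₀ : ‖x₀‖ = ε := by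
    rw [hx₀def, norm_smul, EuclideanSpace.norm_single]
    simp [abs_of_pos hε]
  set c : ℕ → ℝ := fun n => 1 - 1 / (n + 2) with hcdef
  have hc01 : ∀ n, 0 ≤ c n ∧ c n < 1 := by
    intro n
    have h2 : (0:ℝ) < n + 2 := by positivity
    have hle : 1 / ((n:ℝ) + 2) ≤ 1 := by
      rw [div_le_one h2]; linarith
    have hpos : 0 < 1 / ((n:ℝ) + 2) := by positivity
    constructor
    · show 0 ≤ 1 - 1 / ((n:ℝ) + 2); linarith
    · show 1 - 1 / ((n:ℝ) + 2) < 1; linarith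
  set x : ℕ → EuclideanSpace ℝ (Fin d) := fun n => c n • x₀ with hxdef
  have hnx : ∀ n, ‖x n‖ < ε := by
    intro n
    rw [hxdef, norm_smul, hnx₀, Real.norm_eq_abs, abs_of_nonneg (hc01 n).1]
    calc c n * ε < 1 * ε := by
          exact mul_lt_mul_of_pos_right (hc01 n).2 hε
      _ = ε := one_mul ε
  have hmem : ∀ n, ((0:ℝ), x n) ∈ Icc (0:ℝ) ε ×ˢ Metric.closedBall (0 : EuclideanSpace ℝ (Fin d)) ε := by
    intro n
    refine ⟨⟨le_refl _, hε.le⟩, ?_⟩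
    rw [Metric.mem_closedBall, dist_zero_right]
    exact (hnx n).le
  have hmem₀ : ((0:ℝ), x₀) ∈ Icc (0:ℝ) ε ×ˢ Metric.closedBall (0 : EuclideanSpace ℝ (Fin d)) ε := by
    refine ⟨⟨le_refl _, hε.le⟩, ?_⟩
    rw [Metric.mem_closedBall, dist_zero_right, hnx₀]
  -- c n → 1
  have hctend : Tendsto c atTop (𝓝 1) := by
    have h1 : Tendsto (fun n : ℕ => (((n:ℝ) + 2))⁻¹) atTop (𝓝 0) :=
      tendsto_inv_atTop_zero.comp
        (tendsto_atTop_add_const_right atTop 2 tendsto_natCast_atTop_atTop)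
    have := h1.const_sub 1
    simpa [hcdef, one_div] using this
  have hxtend : Tendsto (fun n => ((0:ℝ), x n)) atTop (𝓝 ((0:ℝ), x₀)) := by
    refine Tendsto.prodMk_nhds tendsto_const_nhds ?_
    have : Tendsto (fun n => c n • x₀) atTop (𝓝 ((1:ℝ) • x₀)) :=
      hctend.smul tendsto_const_nhds
    simpa using this
  have hxtend' : Tendsto (fun n => ((0:ℝ), x n)) atTop
      (𝓝[Icc (0:ℝ) ε ×ˢ Metric.closedBall (0 : EuclideanSpace ℝ (Fin d)) ε] ((0:ℝ), x₀)) :=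
    tendsto_nhdsWithin_of_tendsto_nhds_of_eventually_within _ hxtend
      (Eventually.of_forall hmem)
  have hvt : Tendsto (fun n => v ((0:ℝ), x n)) atTop (𝓝 (v ((0:ℝ), x₀))) :=
    ((hcont _ hmem₀).tendsto).comp hxtend'
  have hval : ∀ n, v ((0:ℝ), x n) = ε := by
    intro n
    rw [hconst 0 ε (x n) ⟨le_refl _, hε.le⟩ ⟨hε.le, le_refl _⟩ (hnx n)]
    exact hterm _ (hnx n).le
  have h2 : Tendsto (fun n : ℕ => v ((0:ℝ), x n)) atTop (𝓝 ε) := by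
    simp only [hval]; exact tendsto_const_nhds
  have heq : v ((0:ℝ), x₀) = ε := tendsto_nhds_unique hvt h2
  have h0 : v ((0:ℝ), x₀) = 0 := hlat 0 x₀ le_rfl hε hnx₀
  rw [h0] at heq
  exact hε.ne heq
end

section
/- Let 0 = t₀ < t₁ < … < t_N = T and points X₀, …, X_N ∈ ℝ^d, and similarly 0 = t'₀ < t'₁ < … < t'_N = T and X'₀, …, X'_N. Let f and f' be the piecewise-linear interpolations through (t_i, X_i) and (t'_i, X'_i) respectively. Suppose: (a) t_{i+1} − t_i ≥ δ₁ and t'_{i+1} − t'_i ≥ δ₁ for all i; (b) |t_i − t'_i| ≤ η for all i; (c) |X_i − X'_i| ≤ α and |X_i| ≤ m, |X'_i| ≤ m for all i, with η ≤ δ₁/2. Then for every s ∈ [t_i + η, t_{i+1} − η], one has |f(s) − f'(s)| ≤ 3α + (8 m η)/δ₁. -/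
open Set

/-- Stability of piecewise-linear interpolation: if two interpolations have knots at
distance ≤ η, knot values at distance ≤ α and bounded by m, and spacings ≥ δ₁ with
η ≤ δ₁/2, then away from the knots the interpolants differ by at most
`3α + 8mη/δ₁`. -/
theorem piecewise_linear_interpolation_stability (d N : ℕ) (hN : 0 < N)
    (T δ₁ η α m : ℝ) (hT : 0 < T) (hδ₁ : 0 < δ₁) (hη : 0 ≤ η) (hηδ : η ≤ δ₁ / 2)
    (hα : 0 ≤ α) (hm : 0 ≤ m)
    (t t' : ℕ → ℝ) (X X' : ℕ → EuclideanSpace ℝ (Fin d))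
    (f f' : ℝ → EuclideanSpace ℝ (Fin d))
    (ht0 : t 0 = 0) (htN : t N = T) (ht0' : t' 0 = 0) (htN' : t' N = T)
    (hspace : ∀ i < N, δ₁ ≤ t (i + 1) - t i)
    (hspace' : ∀ i < N, δ₁ ≤ t' (i + 1) - t' i)
    (hclose : ∀ i ≤ N, |t i - t' i| ≤ η)
    (hX : ∀ i ≤ N, ‖X i - X' i‖ ≤ α)
    (hXm : ∀ i ≤ N, ‖X i‖ ≤ m) (hXm' : ∀ i ≤ N, ‖X' i‖ ≤ m)
    (hf : ∀ i < N, ∀ s ∈ Icc (t i) (t (i + 1)),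
      f s = X i + ((s - t i) / (t (i + 1) - t i)) • (X (i + 1) - X i))
    (hf' : ∀ i < N, ∀ s ∈ Icc (t' i) (t' (i + 1)),
      f' s = X' i + ((s - t' i) / (t' (i + 1) - t' i)) • (X' (i + 1) - X' i)) :
    ∀ i < N, ∀ s ∈ Icc (t i + η) (t (i + 1) - η),
      ‖f s - f' s‖ ≤ 3 * α + 8 * m * η / δ₁ := by
  intro i hi s hs
  have hiN : i ≤ N := le_of_lt hi
  have hi1N : i + 1 ≤ N := hi
  have hΔ : δ₁ ≤ t (i + 1) - t i := hspace i hi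
  have hΔ' : δ₁ ≤ t' (i + 1) - t' i := hspace' i hi
  have hΔpos : 0 < t (i + 1) - t i := lt_of_lt_of_le hδ₁ hΔ
  have hΔ'pos : 0 < t' (i + 1) - t' i := lt_of_lt_of_le hδ₁ hΔ'
  have he1 := abs_le.mp (hclose i hiN)
  have he2 := abs_le.mp (hclose (i + 1) hi1N)
  obtain ⟨hs1, hs2⟩ := hs
  have hsIcc : s ∈ Icc (t i) (t (i + 1)) := ⟨by linarith, by linarith⟩
  have hsIcc' : s ∈ Icc (t' i) (t' (i + 1)) := ⟨by linarith [he1.1, he1.2], by linarith [he2.1]⟩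
  rw [hf i hi s hsIcc, hf' i hi s hsIcc']
  set Δ := t (i + 1) - t i with hΔdef
  set Δ' := t' (i + 1) - t' i with hΔ'def
  set a := s - t i with ha
  set a' := s - t' i with ha'
  set lam := a / Δ with hlam
  set lam' := a' / Δ' with hlam'
  set D := X (i + 1) - X i with hD
  set D' := X' (i + 1) - X' i with hD'
  have hrw : X i + lam • D - (X' i + lam' • D')
      = (X i - X' i) + (lam • (D - D') + (lam - lam') • D') := by module
  rw [hrw]
  have hDD' : ‖D - D'‖ ≤ 2 * α := by
    have h1 := hX i hiN
    have h2 := hX (i + 1) hi1N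
    have : D - D' = (X (i + 1) - X' (i + 1)) - (X i - X' i) := by
      rw [hD, hD']; abel
    rw [this]
    calc ‖(X (i + 1) - X' (i + 1)) - (X i - X' i)‖
        ≤ ‖X (i + 1) - X' (i + 1)‖ + ‖X i - X' i‖ := norm_sub_le _ _
      _ ≤ 2 * α := by linarith
  have hD'm : ‖D'‖ ≤ 2 * m := by
    calc ‖D'‖ ≤ ‖X' (i + 1)‖ + ‖X' i‖ := norm_sub_le _ _
      _ ≤ 2 * m := by linarith [hXm' i hiN, hXm' (i + 1) hi1N]
  have hlam0 : 0 ≤ lam := div_nonneg (by linarith) hΔpos.le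
  have hlam1 : lam ≤ 1 := (div_le_one hΔpos).mpr (by linarith)
  have ha'0 : 0 ≤ a' := by linarith [hsIcc'.1]
  have ha'Δ : a' ≤ Δ' := by linarith [hsIcc'.2]
  have hlamdiff : |lam - lam'| ≤ 3 * η / δ₁ := by
    have key : lam - lam' = (a * Δ' - Δ * a') / (Δ * Δ') :=
      div_sub_div a a' hΔpos.ne' hΔ'pos.ne'
    rw [key, abs_div, abs_of_pos (mul_pos hΔpos hΔ'pos)]
    have hnum : |a * Δ' - Δ * a'| ≤ 3 * η * Δ' := by
      have hre : a * Δ' - Δ * a' = (a - a') * Δ' + a' * (Δ' - Δ) := by ring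
      rw [hre]
      have h1 : |a - a'| ≤ η := by
        rw [show a - a' = -(t i - t' i) by rw [ha, ha']; ring, abs_neg]
        exact hclose i hiN
      have h2 : |Δ' - Δ| ≤ 2 * η := by
        rw [abs_le]; constructor <;> [skip; skip] <;>
          simp only [hΔdef, hΔ'def] <;> linarith [he1.1, he1.2, he2.1, he2.2]
      calc |(a - a') * Δ' + a' * (Δ' - Δ)|
          ≤ |(a - a') * Δ'| + |a' * (Δ' - Δ)| := abs_add_le _ _
        _ = |a - a'| * Δ' + a' * |Δ' - Δ| := by
            rw [abs_mul, abs_mul, abs_of_pos hΔ'pos, abs_of_nonneg ha'0]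
        _ ≤ η * Δ' + Δ' * (2 * η) := by
            gcongr
        _ = 3 * η * Δ' := by ring
    rw [div_le_div_iff₀ (mul_pos hΔpos hΔ'pos) hδ₁]
    nlinarith [hnum, mul_pos hΔpos hΔ'pos, abs_nonneg (a * Δ' - Δ * a'),
      mul_nonneg (mul_nonneg (by linarith : (0:ℝ) ≤ 3 * η) hΔ'pos.le) (by linarith : (0:ℝ) ≤ Δ - δ₁)]
  calc ‖(X i - X' i) + (lam • (D - D') + (lam - lam') • D')‖
      ≤ ‖X i - X' i‖ + (‖lam • (D - D')‖ + ‖(lam - lam') • D'‖) :=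
        le_trans (norm_add_le _ _) (by gcongr; exact norm_add_le _ _)
    _ = ‖X i - X' i‖ + (|lam| * ‖D - D'‖ + |lam - lam'| * ‖D'‖) := by
        rw [norm_smul, norm_smul, Real.norm_eq_abs, Real.norm_eq_abs]
    _ ≤ α + (1 * (2 * α) + (3 * η / δ₁) * (2 * m)) := by
        have g1 : |lam| * ‖D - D'‖ ≤ 1 * (2 * α) :=
          mul_le_mul (by rw [abs_of_nonneg hlam0]; exact hlam1) hDD' (norm_nonneg _) zero_le_one
        have g2 : |lam - lam'| * ‖D'‖ ≤ (3 * η / δ₁) * (2 * m) :=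
          mul_le_mul hlamdiff hD'm (norm_nonneg _) (by positivity)
        exact add_le_add (hX i hiN) (add_le_add g1 g2)
    _ ≤ 3 * α + 8 * m * η / δ₁ := by
        have : 3 * η / δ₁ * (2 * m) ≤ 8 * m * η / δ₁ := by
          rw [div_mul_eq_mul_div, div_le_div_iff₀ hδ₁ hδ₁]
          linarith [mul_nonneg (mul_nonneg hm hη) hδ₁.le]
        linarith
end

section
/- Fix t ∈ [0,T), x ∈ ℝ^d, R > 0 with |x| ≤ R, and L₁ > 0. Let ω : [t,T] → ℝ^d be continuous with ω(t) = 0, and define H(ω) := inf { s ≥ t : |x + ω(s)| + L₁(s − t) ≥ R } ∧ T. Let τ ∈ [t, H(ω)]. Then H(ω) = inf { s ≥ τ : |(x + ω(τ)) + (ω(s) − ω(τ))| + L₁(s − τ) ≥ R − L₁(τ − t) } ∧ T; that is, the hitting time satisfies the flow (pseudo-Markov) property H^{t,x,R}(ω) = H^{τ, x+ω(τ), R−L₁(τ−t)}(ω(·) − ω(τ)). -/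
open Set

/-- Pathwise flow (pseudo-Markov) property (3.3) of the hitting time
`H = inf { s ≥ t : |x + ω(s)| + L₁(s − t) ≥ R } ∧ T`: for any `τ ∈ [t, H]`,
`H = inf { s ≥ τ : |(x + ω(τ)) + (ω(s) − ω(τ))| + L₁(s − τ) ≥ R − L₁(τ − t) } ∧ T`. -/
theorem hitting_time_flow_property (d : ℕ) (T t τ L₁ R : ℝ)
    (x : EuclideanSpace ℝ (Fin d))
    (hT : 0 < T) (ht : 0 ≤ t) (htT : t < T) (hL : 0 < L₁) (hR : 0 < R) (hx : ‖x‖ ≤ R)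
    (ω : ℝ → EuclideanSpace ℝ (Fin d)) (hω : ContinuousOn ω (Icc t T)) (hω0 : ω t = 0)
    (H : ℝ)
    (hH : H = sInf ({s ∈ Icc t T | R ≤ ‖x + ω s‖ + L₁ * (s - t)} ∪ {T}))
    (hτ : τ ∈ Icc t H) :
    H = sInf ({s ∈ Icc τ T |
      R - L₁ * (τ - t) ≤ ‖(x + ω τ) + (ω s - ω τ)‖ + L₁ * (s - τ)} ∪ {T}) := by
  have htτ : t ≤ τ := hτ.1
  have hτH : τ ≤ H := hτ.2
  set A := {s ∈ Icc t T | R ≤ ‖x + ω s‖ + L₁ * (s - t)} ∪ {T} with hA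
  have hbdd : BddBelow A := by
    refine ⟨t, ?_⟩
    rintro a (⟨⟨h1, _⟩, _⟩ | rfl)
    · exact h1
    · exact htT.le
  have hmem : ∀ a ∈ A, τ ≤ a := fun a ha =>
    hτH.trans (by rw [hH]; exact csInf_le hbdd ha)
  have hset : {s ∈ Icc τ T |
      R - L₁ * (τ - t) ≤ ‖(x + ω τ) + (ω s - ω τ)‖ + L₁ * (s - τ)} ∪ {T} = A := by
    ext a
    have hnorm : (x + ω τ) + (ω a - ω τ) = x + ω a := by abel
    simp only [hA, mem_union, mem_setOf_eq, mem_singleton_iff, mem_Icc, hnorm]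
    constructor
    · rintro (⟨⟨h1, h2⟩, h3⟩ | rfl)
      · exact Or.inl ⟨⟨htτ.trans h1, h2⟩, by linarith⟩
      · exact Or.inr rfl
    · rintro (⟨⟨h1, h2⟩, h3⟩ | rfl)
      · have hta := hmem a (Or.inl ⟨⟨h1, h2⟩, h3⟩)
        exact Or.inl ⟨⟨hta, h2⟩, by linarith⟩
      · exact Or.inr rfl
  rw [hset, hH]
end
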